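/- Let n ≥ 2 and let d = (d_1, …, d_n) be integers with 2 ≤ d_1 ≤ ⋯ ≤ d_n and d_n − 1 > ∑_{i=1}^{n−1}(d_i − 1). Then there exists an n-player game X of format d over ℂ whose Nash equilibrium set is empty. -/

import Mathlib

/-- Insert the value `s` at position `i` into an index tuple defined on all positions `≠ i`,
producing a full multi-index in `∏ k, Fin (d k)`. -/
def insertAt {n : ℕ} (d : Fin n → ℕ) (i : Fin n) (s : Fin (d i))
    (j : ∀ m : {m : Fin n // m ≠ i}, Fin (d m.1)) : ∀ k, Fin (d k) :=
  fun k => if h : k = i then Fin.cast (congrArg d h.symm) s else j ⟨k, h⟩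

/-- The contraction `X⁽ⁱ⁾(π₋ᵢ) ∈ K^{dᵢ}`: its `s`-th entry is
`∑_{j₋ᵢ} X_{(s, j₋ᵢ)} ∏_{l ≠ i} π⁽ˡ⁾_{j_l}`. -/
noncomputable def contraction {n : ℕ} (d : Fin n → ℕ) {K : Type*} [CommRing K] (i : Fin n)
    (X : (∀ k, Fin (d k)) → K)
    (π : ∀ m : {m : Fin n // m ≠ i}, Fin (d m.1) → K) (s : Fin (d i)) : K :=
  ∑ j : ∀ m : {m : Fin n // m ≠ i}, Fin (d m.1),
    X (insertAt d i s j) * ∏ m : {m : Fin n // m ≠ i}, π m (j m)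

/-!
Index strategies from `0`. Let the last player `p` receive payoff `1` exactly when his index is
the sum of the other players' indices. Then his contraction against `π₋ₚ` is the coefficient
vector of `Q = ∏_{m ≠ p} ∑_j π⁽ᵐ⁾_j X^j`. Since `Q ≠ 0` and
`deg Q ≤ ∑_{m ≠ p} (d_m - 1) < d_p - 1`, the contraction has a nonzero entry at `deg Q` and a
zero entry at `d_p - 1`, so player `p` is never indifferent.
-/

open Polynomial Finset

namespace Polynomial

theorem coeff_natDegree_ne_coeff_of_natDegree_lt {R : Type*} [Semiring R] {Q : R[X]}
    (hQ : Q ≠ 0) {N : ℕ} (hN : Q.natDegree < N) : Q.coeff Q.natDegree ≠ Q.coeff N := by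
  rw [coeff_eq_zero_of_natDegree_lt hN]
  exact leadingCoeff_ne_zero.2 hQ

section Semiring

variable {R : Type*} [Semiring R] [DecidableEq R]

theorem natDegree_ofFn_le (k : ℕ) (v : Fin k → R) : (ofFn k v).natDegree ≤ k - 1 :=
  natDegree_le_iff_coeff_eq_zero.2 fun _ hi => ofFn_coeff_eq_zero_of_ge v (by omega)

theorem ofFn_ne_zero {k : ℕ} {v : Fin k → R} (hv : v ≠ 0) : ofFn k v ≠ 0 :=
  (map_ne_zero_iff _ (injective_ofFn k)).2 hv

end Semiring

theorem natDegree_prod_ofFn_le {R ι : Type*} [CommSemiring R] [DecidableEq R] [Fintype ι]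
    (k : ι → ℕ) (v : ∀ m, Fin (k m) → R) :
    (∏ m, ofFn (k m) (v m)).natDegree ≤ ∑ m, (k m - 1) :=
  (natDegree_prod_le _ _).trans (sum_le_sum fun m _ => natDegree_ofFn_le (k m) (v m))

end Polynomial

section ConvolutionPayoff

variable {n : ℕ} (d : Fin n → ℕ) {K : Type*} [CommRing K]

def convolutionPayoff (p : Fin n) (j : ∀ k, Fin (d k)) : K :=
  if ∑ m : {m : Fin n // m ≠ p}, (j m.1 : ℕ) = j p then 1 else 0

theorem contraction_convolutionPayoff [DecidableEq K] (p : Fin n)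
    (π : ∀ m : {m : Fin n // m ≠ p}, Fin (d m.1) → K) (s : Fin (d p)) :
    contraction d p (convolutionPayoff d p) π s = (∏ m, ofFn (d m.1) (π m)).coeff s := by
  simp only [ofFn_eq_sum_monomial, ← C_mul_X_pow_eq_monomial, Fintype.prod_sum,
    prod_mul_distrib, ← map_prod, prod_pow_eq_pow_sum, finsetSum_coeff, coeff_C_mul_X_pow,
    contraction]
  refine sum_congr rfl fun j _ => ?_
  have hinsert_p : (insertAt d p s j p : ℕ) = s := by simp [insertAt]
  have hinsert_ne (m : {m : Fin n // m ≠ p}) : insertAt d p s j m.1 = j m := by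
    simp [insertAt, m.2]
  simp only [convolutionPayoff, hinsert_p, hinsert_ne, eq_comm (a := (s : ℕ))]
  split_ifs <;> ring

end ConvolutionPayoff

/-- if `2 ≤ d₁ ≤ ⋯ ≤ dₙ` and `dₙ - 1 > ∑_{i=1}^{n-1}(dᵢ - 1)`, then there
exists an `n`-player game of format `d` over `ℂ` whose Nash equilibrium set is empty. -/
theorem exists_game_with_empty_nash_set (n : ℕ) (hn : 2 ≤ n) (d : Fin n → ℕ)
    (hfmt : ∑ i ∈ Finset.univ.erase (⟨n - 1, by omega⟩ : Fin n), (d i - 1) <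
      d ⟨n - 1, by omega⟩ - 1) :
    ∃ X : ∀ i : Fin n, (∀ k, Fin (d k)) → ℂ,
      ∀ π : ∀ k, Fin (d k) → ℂ, (∀ k, π k ≠ 0) →
        ¬ (∀ i : Fin n, ∀ s t : Fin (d i),
            contraction d i (X i) (fun m => π m.1) s =
              contraction d i (X i) (fun m => π m.1) t) := by
  set p : Fin n := ⟨n - 1, by omega⟩
  refine ⟨fun _ => convolutionPayoff d p, fun π hπ hNash => ?_⟩
  set Q := ∏ m : {m : Fin n // m ≠ p}, ofFn (d m.1) (π m.1)
  have hQ : Q ≠ 0 := prod_ne_zero_iff.2 fun m _ => ofFn_ne_zero (hπ m.1)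
  have hdeg : Q.natDegree < d p - 1 := by
    have hsum : ∑ m : {m : Fin n // m ≠ p}, (d m.1 - 1) = ∑ m ∈ univ.erase p, (d m - 1) :=
      (sum_subtype (univ.erase p) (by simp) (fun m => d m - 1)).symm
    exact (natDegree_prod_ofFn_le _ _).trans_lt (hsum ▸ hfmt)
  have hindiff := hNash p ⟨Q.natDegree, by omega⟩ ⟨d p - 1, by omega⟩
  rw [contraction_convolutionPayoff, contraction_convolutionPayoff] at hindiff
  exact coeff_natDegree_ne_coeff_of_natDegree_lt hQ hdeg hindiff
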